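/- Let ρ(x) = φ(x)/Φ̄(x) be the inverse Mills ratio of the standard normal. Then for all x ∈ ℝ and δ ≥ 0: exp(-δ ρ(x+δ)) ≤ Φ̄(x+δ)/Φ̄(x) ≤ exp(-δ ρ(x)), and exp(-ρ(x)δ - δ²/2) ≤ Φ̄(x+δ)/Φ̄(x) ≤ exp(-xδ - δ²/2). -/

import Mathlib

open MeasureTheory

/-- standard normal density -/
noncomputable def gaussPDF (x : ℝ) : ℝ := (Real.sqrt (2 * Real.pi))⁻¹ * Real.exp (-x ^ 2 / 2)

/-- standard normal upper tail -/
noncomputable def gaussTail (x : ℝ) : ℝ := ∫ t in Set.Ioi x, gaussPDF t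

/-- inverse Mills ratio -/
noncomputable def millsRho (x : ℝ) : ℝ := gaussPDF x / gaussTail x

section Aux
open Set Filter Real

lemma gaussPDF_pos (x : ℝ) : 0 < gaussPDF x := by
  unfold gaussPDF
  positivity

lemma gaussPDF_eq (x : ℝ) : gaussPDF x = (Real.sqrt (2 * Real.pi))⁻¹ * Real.exp (-(1/2) * x ^ 2) := by
  unfold gaussPDF; ring_nf

lemma integrable_gaussPDF : Integrable gaussPDF := by
  have := (integrable_exp_neg_mul_sq (by norm_num : (0:ℝ) < 1/2)).const_mul (Real.sqrt (2 * Real.pi))⁻¹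
  refine this.congr ?_
  filter_upwards with t
  rw [gaussPDF_eq]

lemma continuous_gaussPDF : Continuous gaussPDF := by
  unfold gaussPDF
  continuity

lemma integrable_mul_gaussPDF : Integrable (fun t : ℝ => t * gaussPDF t) := by
  have := (integrable_mul_exp_neg_mul_sq (by norm_num : (0:ℝ) < 1/2)).const_mul (Real.sqrt (2 * Real.pi))⁻¹
  refine this.congr ?_
  filter_upwards with t
  rw [gaussPDF_eq]; ring

lemma hasDerivAt_gaussPDF (x : ℝ) : HasDerivAt gaussPDF (-x * gaussPDF x) x := by
  have h : HasDerivAt (fun t : ℝ => -t ^ 2 / 2) (-x) x := by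
    have := ((hasDerivAt_pow 2 x).neg).div_const 2
    simpa using this.congr_deriv (by ring)
  have := ((Real.hasDerivAt_exp (-x ^ 2 / 2)).comp x h).const_mul (Real.sqrt (2 * Real.pi))⁻¹
  unfold gaussPDF
  exact this.congr_deriv (by ring)

lemma gaussPDF_eq' (x : ℝ) : gaussPDF x = (Real.sqrt (2 * Real.pi))⁻¹ * Real.exp (-x ^ 2 / 2) := rfl

lemma tendsto_gaussPDF_atTop : Tendsto gaussPDF atTop (nhds 0) := by
  have h1 : Tendsto (fun t : ℝ => -t ^ 2 / 2) atTop atBot := by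
    apply Filter.Tendsto.atBot_div_const (by norm_num)
    exact tendsto_neg_atBot_iff.mpr (tendsto_pow_atTop (by norm_num))
  have := (Real.tendsto_exp_atBot.comp h1).const_mul (Real.sqrt (2 * Real.pi))⁻¹
  have h2 : Tendsto (fun t : ℝ => (Real.sqrt (2 * Real.pi))⁻¹ * Real.exp (-t ^ 2 / 2)) atTop (nhds ((Real.sqrt (2 * Real.pi))⁻¹ * 0)) := this
  rw [mul_zero] at h2
  exact h2.congr (fun t => (gaussPDF_eq' t).symm)

lemma integral_Ioi_mul_gaussPDF (x : ℝ) : ∫ t in Set.Ioi x, t * gaussPDF t = gaussPDF x := by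
  have h := integral_Ioi_of_hasDerivAt_of_tendsto' (f := fun t => -gaussPDF t)
    (f' := fun t => t * gaussPDF t) (a := x) (m := 0)
    (fun t _ => (hasDerivAt_gaussPDF t).neg.congr_deriv (by ring))
    (integrable_mul_gaussPDF.integrableOn)
    (by simpa using tendsto_gaussPDF_atTop.neg)
  simpa using h

lemma gaussTail_pos (x : ℝ) : 0 < gaussTail x := by
  unfold gaussTail
  rw [setIntegral_pos_iff_support_of_nonneg_ae]
  · have : Function.support gaussPDF = Set.univ := by
      ext t; simp [(gaussPDF_pos t).ne']
    rw [this, Set.univ_inter]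
    simp [Real.volume_Ioi]
  · filter_upwards with t using (gaussPDF_pos t).le
  · exact integrable_gaussPDF.integrableOn

lemma gaussTail_eq (a : ℝ) : gaussTail a = gaussTail 0 - ∫ t in (0:ℝ)..a, gaussPDF t := by
  have key : ∀ u v : ℝ, u ≤ v → gaussTail u - gaussTail v = ∫ t in u..v, gaussPDF t := by
    intro u v huv
    rw [intervalIntegral.integral_of_le huv]
    unfold gaussTail
    rw [← Set.Ioc_union_Ioi_eq_Ioi huv,
      setIntegral_union (Set.Ioc_disjoint_Ioi le_rfl) measurableSet_Ioi
        integrable_gaussPDF.integrableOn integrable_gaussPDF.integrableOn]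
    ring
  rcases le_total 0 a with h | h
  · have := key 0 a h; linarith
  · have := key a 0 h
    rw [intervalIntegral.integral_symm]
    linarith

lemma hasDerivAt_gaussTail (x : ℝ) : HasDerivAt gaussTail (-gaussPDF x) x := by
  have h : HasDerivAt (fun u => ∫ t in (0:ℝ)..u, gaussPDF t) (gaussPDF x) x :=
    intervalIntegral.integral_hasDerivAt_right
      integrable_gaussPDF.intervalIntegrable
      continuous_gaussPDF.aestronglyMeasurable.stronglyMeasurableAtFilter
      continuous_gaussPDF.continuousAt
  have := (hasDerivAt_const x (gaussTail 0)).sub h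
  refine HasDerivAt.congr_of_eventuallyEq ?_ (Filter.Eventually.of_forall gaussTail_eq)
  exact this.congr_deriv (by simp)

lemma gaussPDF_ge_mul_tail (x : ℝ) : x * gaussTail x ≤ gaussPDF x := by
  rw [← integral_Ioi_mul_gaussPDF x]
  unfold gaussTail
  rw [← MeasureTheory.integral_const_mul]
  apply setIntegral_mono_on (integrable_gaussPDF.integrableOn.const_mul x)
    (integrable_mul_gaussPDF.integrableOn) measurableSet_Ioi
  intro t ht
  exact mul_le_mul_of_nonneg_right (le_of_lt ht) (gaussPDF_pos t).le

lemma millsRho_pos (x : ℝ) : 0 < millsRho x := div_pos (gaussPDF_pos x) (gaussTail_pos x)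

lemma le_millsRho (x : ℝ) : x ≤ millsRho x := by
  rw [millsRho, le_div_iff₀ (gaussTail_pos x)]
  exact gaussPDF_ge_mul_tail x

lemma millsRho_eq (x : ℝ) : gaussPDF x = millsRho x * gaussTail x := by
  rw [millsRho, div_mul_cancel₀]
  exact (gaussTail_pos x).ne'

lemma hasDerivAt_millsRho (x : ℝ) :
    HasDerivAt millsRho (millsRho x * (millsRho x - x)) x := by
  have h := (hasDerivAt_gaussPDF x).div (hasDerivAt_gaussTail x) (gaussTail_pos x).ne'
  refine h.congr_deriv ?_
  have ht := (gaussTail_pos x).ne'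
  simp only [millsRho]
  field_simp
  ring

lemma millsRho_mono : Monotone millsRho := by
  apply monotone_of_deriv_nonneg
  · exact fun x => (hasDerivAt_millsRho x).differentiableAt
  · intro x
    rw [(hasDerivAt_millsRho x).deriv]
    exact mul_nonneg (millsRho_pos x).le (sub_nonneg.mpr (le_millsRho x))

lemma ratio_le_aux {a b u v : ℝ} (h : gaussTail b * Real.exp u ≤ gaussTail a * Real.exp v) :
    gaussTail b / gaussTail a ≤ Real.exp (v - u) := by
  rw [div_le_iff₀ (gaussTail_pos a)]
  have h2 : gaussTail b ≤ gaussTail a * Real.exp v / Real.exp u :=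
    (le_div_iff₀ (Real.exp_pos u)).2 h
  rw [mul_div_assoc, ← Real.exp_sub] at h2
  linarith [h2]

lemma ratio_ge_aux {a b u v : ℝ} (h : gaussTail a * Real.exp v ≤ gaussTail b * Real.exp u) :
    Real.exp (v - u) ≤ gaussTail b / gaussTail a := by
  rw [le_div_iff₀ (gaussTail_pos a)]
  have h2 : gaussTail a * Real.exp v / Real.exp u ≤ gaussTail b :=
    (div_le_iff₀ (Real.exp_pos u)).2 h
  rw [mul_div_assoc, ← Real.exp_sub] at h2
  linarith [h2]

lemma hasDerivAt_aux (c s : ℝ) :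
    HasDerivAt (fun s => gaussTail s * Real.exp (s * c))
      (Real.exp (s * c) * ((c - millsRho s) * gaussTail s)) s := by
  have he : HasDerivAt (fun s : ℝ => Real.exp (s * c)) (Real.exp (s * c) * c) s :=
    (hasDerivAt_mul_const c).exp
  have := (hasDerivAt_gaussTail s).mul he
  refine this.congr_deriv ?_
  rw [millsRho_eq s]
  ring

lemma bound2 (x δ : ℝ) (hδ : 0 ≤ δ) :
    gaussTail (x + δ) / gaussTail x ≤ Real.exp (-δ * millsRho x) := by
  set c := millsRho x with hc
  have hanti : AntitoneOn (fun s => gaussTail s * Real.exp (s * c)) (Set.Ici x) := by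
    apply antitoneOn_of_deriv_nonpos (convex_Ici x)
    · exact fun s _ => ((hasDerivAt_gaussTail s).mul
        (hasDerivAt_mul_const c).exp).continuousAt.continuousWithinAt
    · exact fun s _ => (hasDerivAt_aux c s).differentiableAt.differentiableWithinAt
    · intro s hs
      rw [interior_Ici] at hs
      rw [(hasDerivAt_aux c s).deriv]
      have h1 : c ≤ millsRho s := millsRho_mono (le_of_lt hs)
      have h2 := gaussTail_pos s
      have h3 : (c - millsRho s) * gaussTail s ≤ 0 :=
        mul_nonpos_of_nonpos_of_nonneg (by linarith) h2.le
      exact mul_nonpos_of_nonneg_of_nonpos (Real.exp_pos _).le h3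
  have h := hanti (Set.self_mem_Ici) (by simp [hδ] : x + δ ∈ Set.Ici x) (by linarith)
  have := ratio_le_aux (a := x) (b := x + δ) h
  convert this using 2
  ring

lemma bound1 (x δ : ℝ) (hδ : 0 ≤ δ) :
    Real.exp (-δ * millsRho (x + δ)) ≤ gaussTail (x + δ) / gaussTail x := by
  set c := millsRho (x + δ) with hc
  have hmono : MonotoneOn (fun s => gaussTail s * Real.exp (s * c)) (Set.Iic (x + δ)) := by
    apply monotoneOn_of_deriv_nonneg (convex_Iic (x + δ))
    · exact fun s _ => ((hasDerivAt_gaussTail s).mul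
        (hasDerivAt_mul_const c).exp).continuousAt.continuousWithinAt
    · exact fun s _ => (hasDerivAt_aux c s).differentiableAt.differentiableWithinAt
    · intro s hs
      rw [interior_Iic] at hs
      rw [(hasDerivAt_aux c s).deriv]
      have h1 : millsRho s ≤ c := millsRho_mono (le_of_lt hs)
      have h2 := gaussTail_pos s
      exact mul_nonneg (Real.exp_pos _).le (mul_nonneg (by linarith) h2.le)
  have h := hmono (by simp [hδ] : x ∈ Set.Iic (x + δ)) (Set.self_mem_Iic) (by linarith)
  have := ratio_ge_aux (a := x) (b := x + δ) h
  convert this using 2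
  ring

lemma bound4 (x δ : ℝ) (hδ : 0 ≤ δ) :
    gaussTail (x + δ) / gaussTail x ≤ Real.exp (-x * δ - δ ^ 2 / 2) := by
  have hanti : Antitone (fun s => gaussTail s * Real.exp (s ^ 2 / 2)) := by
    apply antitone_of_deriv_nonpos
    · intro s
      exact ((hasDerivAt_gaussTail s).mul
        (((hasDerivAt_pow 2 s).div_const 2).exp)).differentiableAt
    · intro s
      have hd : HasDerivAt (fun s : ℝ => gaussTail s * Real.exp (s ^ 2 / 2))
          (-gaussPDF s * Real.exp (s ^ 2 / 2) +
            gaussTail s * (Real.exp (s ^ 2 / 2) * (2 * s ^ 1 / 2))) s :=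
        (hasDerivAt_gaussTail s).mul (((hasDerivAt_pow 2 s).div_const 2).exp)
      rw [hd.deriv]
      have h1 := gaussPDF_ge_mul_tail s
      nlinarith [Real.exp_pos (s ^ 2 / 2)]
  have h := hanti (by linarith : x ≤ x + δ)
  have := ratio_le_aux (a := x) (b := x + δ) h
  convert this using 2
  ring

lemma gaussPDF_add (t δ : ℝ) :
    gaussPDF (t + δ) = gaussPDF t * Real.exp (-t * δ - δ ^ 2 / 2) := by
  unfold gaussPDF
  rw [mul_assoc, ← Real.exp_add]
  congr 1
  ring

lemma gaussTail_shift (x δ : ℝ) :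
    gaussTail (x + δ) = ∫ t in Set.Ioi x, gaussPDF (t + δ) := by
  unfold gaussTail
  rw [← integral_indicator measurableSet_Ioi, ← integral_indicator measurableSet_Ioi,
    ← integral_add_right_eq_self (Set.indicator (Set.Ioi (x + δ)) gaussPDF) δ]
  congr 1
  ext t
  simp [Set.indicator_apply, Set.mem_Ioi, add_lt_add_iff_right]

lemma integrable_gaussPDF_add (δ : ℝ) : Integrable (fun t : ℝ => gaussPDF (t + δ)) :=
  integrable_gaussPDF.comp_add_right δ

lemma bound3 (x δ : ℝ) (hδ : 0 ≤ δ) :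
    Real.exp (-millsRho x * δ - δ ^ 2 / 2) ≤ gaussTail (x + δ) / gaussTail x := by
  set ρ := millsRho x with hρ
  set C := Real.exp (-ρ * δ - δ ^ 2 / 2) with hC
  have hIgfull : Integrable (fun t : ℝ => C * ((1 + ρ * δ) * gaussPDF t - δ * (t * gaussPDF t))) :=
    ((integrable_gaussPDF.const_mul _).sub (integrable_mul_gaussPDF.const_mul _)).const_mul C
  have step : (∫ t in Set.Ioi x, C * ((1 + ρ * δ) * gaussPDF t - δ * (t * gaussPDF t)))
      ≤ ∫ t in Set.Ioi x, gaussPDF (t + δ) := by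
    apply setIntegral_mono_on hIgfull.integrableOn
      (integrable_gaussPDF_add δ).integrableOn measurableSet_Ioi
    intro t _
    have hexp : 1 + (ρ - t) * δ ≤ Real.exp ((ρ - t) * δ) := by
      linarith [Real.add_one_le_exp ((ρ - t) * δ)]
    rw [gaussPDF_add t δ]
    have hφ := (gaussPDF_pos t).le
    calc C * ((1 + ρ * δ) * gaussPDF t - δ * (t * gaussPDF t))
        = gaussPDF t * (C * (1 + (ρ - t) * δ)) := by ring
      _ ≤ gaussPDF t * (C * Real.exp ((ρ - t) * δ)) := by
          apply mul_le_mul_of_nonneg_left _ hφ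
          exact mul_le_mul_of_nonneg_left hexp (Real.exp_pos _).le
      _ = gaussPDF t * Real.exp (-t * δ - δ ^ 2 / 2) := by
          rw [hC, ← Real.exp_add]
          congr 2
          ring
  have hcomp : (∫ t in Set.Ioi x, C * ((1 + ρ * δ) * gaussPDF t - δ * (t * gaussPDF t)))
      = C * gaussTail x := by
    rw [MeasureTheory.integral_const_mul,
      integral_sub ((integrable_gaussPDF.const_mul _).integrableOn)
        ((integrable_mul_gaussPDF.const_mul _).integrableOn),
      MeasureTheory.integral_const_mul, MeasureTheory.integral_const_mul,
      integral_Ioi_mul_gaussPDF]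
    have h0 : (∫ t in Set.Ioi x, gaussPDF t) = gaussTail x := rfl
    rw [h0, millsRho_eq x, ← hρ]
    ring
  rw [le_div_iff₀ (gaussTail_pos x)]
  rw [gaussTail_shift x δ]
  calc C * gaussTail x = _ := hcomp.symm
    _ ≤ _ := step

end Aux

/-- Carter–Pollard Gaussian shift bounds:
e^{-δρ(x+δ)} ≤ Φ̄(x+δ)/Φ̄(x) ≤ e^{-δρ(x)} and
e^{-ρ(x)δ - δ²/2} ≤ Φ̄(x+δ)/Φ̄(x) ≤ e^{-xδ - δ²/2}. -/
theorem gaussian_tail_shift_bounds :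
    ∀ x δ : ℝ, 0 ≤ δ →
      Real.exp (-δ * millsRho (x + δ)) ≤ gaussTail (x + δ) / gaussTail x ∧
      gaussTail (x + δ) / gaussTail x ≤ Real.exp (-δ * millsRho x) ∧
      Real.exp (-millsRho x * δ - δ ^ 2 / 2) ≤ gaussTail (x + δ) / gaussTail x ∧
      gaussTail (x + δ) / gaussTail x ≤ Real.exp (-x * δ - δ ^ 2 / 2) := by
  intro x δ hδ
  exact ⟨bound1 x δ hδ, bound2 x δ hδ, bound3 x δ hδ, bound4 x δ hδ⟩
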